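/- arXiv:1306.1967 — 6 statements merged into one kernel-verified Lean document; each statement's English description precedes it below -/
import Mathlib

section
/- Let G be a split graph whose vertex set is partitioned into k independent sets P_1, ..., P_k (a proper k-coloring). Then for each part P_i, there is a subset H ⊆ P_i with |H| ≥ (|P_i| - 1) / 2^(k-1) such that H is homogeneous in G, i.e., every vertex outside H is either adjacent to all vertices of H or to none. -/
variable {V : Type*}

/-- A set is independent: pairwise nonadjacent. -/
def IsIndep (G : SimpleGraph V) (s : Set V) : Prop :=
  s.Pairwise fun u v => ¬ G.Adj u v

/-- `H` is homogeneous in `G`: every vertex outside `H` is adjacent to all of `H` or none. -/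
def IsHomog (G : SimpleGraph V) (H : Set V) : Prop :=
  ∀ v ∉ H, (∀ h ∈ H, G.Adj v h) ∨ (∀ h ∈ H, ¬ G.Adj v h)

/-- A split graph: vertices partition into a clique and an independent set. -/
def IsSplit (G : SimpleGraph V) : Prop :=
  ∃ C : Set V, G.IsClique C ∧ IsIndep G Cᶜ

/-- `f` is an `M`-partition of `G`: entries `some true`/`some false`/`none` mean 1/0/*. -/
def IsMPartition {m : ℕ} (M : Matrix (Fin m) (Fin m) (Option Bool))
    (G : SimpleGraph V) (f : V → Fin m) : Prop :=
  ∀ u v : V, u ≠ v →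
    (M (f u) (f v) = some true → G.Adj u v) ∧
    (M (f u) (f v) = some false → ¬ G.Adj u v)

def HasMPartition {m : ℕ} (M : Matrix (Fin m) (Fin m) (Option Bool))
    (G : SimpleGraph V) : Prop :=
  ∃ f, IsMPartition M G f

/-- `G` is a minimal `M`-obstruction: no `M`-partition, but every vertex-deleted
induced subgraph has one. -/
def IsMinimalMObstruction {m : ℕ} (M : Matrix (Fin m) (Fin m) (Option Bool))
    (G : SimpleGraph V) : Prop :=
  ¬ HasMPartition M G ∧ ∀ v : V, HasMPartition M (G.induce {v}ᶜ)

/-- A partition of `V(G)` into `k` independent sets followed by `ℓ` cliques. -/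
def IsKLPartition (G : SimpleGraph V) (k ℓ : ℕ) (f : V → Fin (k + ℓ)) : Prop :=
  ∀ i : Fin (k + ℓ),
    if (i : ℕ) < k then IsIndep G (f ⁻¹' {i}) else G.IsClique (f ⁻¹' {i})

/-!
The part `P = P_i` meets the clique `C` in at most one vertex, and a vertex of `P \ C` can only
be adjacent to the vertices of `C \ P`. These lie in pairwise distinct parts other than `P_i`, so
there are at most `k - 1` of them. Halving `P \ C` once for each of them, keeping each time the
larger of its neighbours and non-neighbours of that vertex, leaves a set of size at least
`(|P| - 1) / 2 ^ (k - 1)` that every vertex outside it sees completely or not at all.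
-/

open Finset

namespace SimpleGraph

variable (G : SimpleGraph V)

theorem exists_subset_card_le_two_mul_card_adj_all_or_none (v : V) (Q : Finset V) :
    ∃ H ⊆ Q, #Q ≤ 2 * #H ∧ ((∀ h ∈ H, G.Adj v h) ∨ ∀ h ∈ H, ¬ G.Adj v h) := by
  classical
  have hsplit := Q.card_filter_add_card_filter_not (G.Adj v)
  rcases le_total #(Q.filter (G.Adj v)) #(Q.filter (¬ G.Adj v ·)) with hle | hle
  · exact ⟨_, filter_subset _ _, by omega, Or.inr fun h hh => (mem_filter.1 hh).2⟩
  · exact ⟨_, filter_subset _ _, by omega, Or.inl fun h hh => (mem_filter.1 hh).2⟩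

theorem exists_subset_card_le_two_pow_mul_card_adj_all_or_none (S Q : Finset V) :
    ∃ H ⊆ Q, #Q ≤ 2 ^ #S * #H ∧
      ∀ s ∈ S, (∀ h ∈ H, G.Adj s h) ∨ ∀ h ∈ H, ¬ G.Adj s h := by
  classical
  induction S using Finset.induction_on generalizing Q with
  | empty => exact ⟨Q, subset_rfl, by simp, by simp⟩
  | @insert s S hs ih =>
    obtain ⟨Q', hQ'Q, hQQ', hsQ'⟩ := G.exists_subset_card_le_two_mul_card_adj_all_or_none s Q
    obtain ⟨H, hHQ', hQ'H, hSH⟩ := ih Q'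
    refine ⟨H, hHQ'.trans hQ'Q, ?_, ?_⟩
    · calc #Q ≤ 2 * #Q' := hQQ'
        _ ≤ 2 * (2 ^ #S * #H) := Nat.mul_le_mul_left 2 hQ'H
        _ = 2 ^ #(insert s S) * #H := by rw [card_insert_of_notMem hs, pow_succ]; ring
    · intro t ht
      rcases mem_insert.1 ht with rfl | ht
      · exact hsQ'.imp (fun h x hx => h x (hHQ' hx)) (fun h x hx => h x (hHQ' hx))
      · exact hSH t ht

variable {G}

theorem IsClique.injOn_of_isIndep_fibers {α : Type*} {C : Set V} (hC : G.IsClique C)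
    {f : V → α} (hf : ∀ j, IsIndep G (f ⁻¹' {j})) : Set.InjOn f C := by
  intro u hu v hv huv
  by_contra hne
  exact hf (f u) rfl huv.symm hne (hC hu hv hne)

theorem IsClique.ncard_diff_fiber_le {C : Set V} (hC : G.IsClique C) {k : ℕ} {f : V → Fin k}
    (hf : ∀ j, IsIndep G (f ⁻¹' {j})) (i : Fin k) : (C \ f ⁻¹' {i}).ncard ≤ k - 1 := by
  calc (C \ f ⁻¹' {i}).ncard ≤ ({i}ᶜ : Set (Fin k)).ncard :=
        Set.ncard_le_ncard_of_injOn f (fun v hv => hv.2)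
          ((hC.injOn_of_isIndep_fibers hf).mono Set.sdiff_subset)
    _ = k - 1 := by rw [Set.ncard_compl, Nat.card_eq_fintype_card, Fintype.card_fin,
        Set.ncard_singleton]

theorem ncard_le_ncard_diff_add_one [Finite V] {P C : Set V} (hP : IsIndep G P)
    (hC : G.IsClique C) : P.ncard ≤ (P \ C).ncard + 1 := by
  have hPC : (P ∩ C).ncard ≤ 1 :=
    (Set.ncard_le_one).2 fun u hu v hv =>
      by_contra fun hne => hP hu.1 hv.1 hne (hC hu.2 hv.2 hne)
  have := Set.ncard_inter_add_ncard_sdiff_eq_ncard P C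
  omega

theorem isHomog_of_subset_diff {P C H : Set V} (hP : IsIndep G P) (hI : IsIndep G Cᶜ)
    (hH : H ⊆ P \ C)
    (hhom : ∀ s ∈ C \ P, (∀ h ∈ H, G.Adj s h) ∨ ∀ h ∈ H, ¬ G.Adj s h) :
    IsHomog G H := by
  intro v hvH
  by_cases hvP : v ∈ P
  · exact Or.inr fun h hh => hP hvP (hH hh).1 (ne_of_mem_of_not_mem hh hvH).symm
  by_cases hvC : v ∈ C
  · exact hhom v ⟨hvC, hvP⟩
  · exact Or.inr fun h hh => hI hvC (hH hh).2 (ne_of_mem_of_not_mem hh hvH).symm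

end SimpleGraph

/-- in a split graph properly `k`-colored by `f`, each color class `P_i`
contains a homogeneous set `H` with `|H| ≥ (|P_i| - 1) / 2^(k-1)`. -/
theorem stmt0 {V : Type*} [Fintype V] (G : SimpleGraph V) (hG : IsSplit G)
    (k : ℕ) (f : V → Fin k) (hf : ∀ i : Fin k, IsIndep G (f ⁻¹' {i})) (i : Fin k) :
    ∃ H : Set V, H ⊆ f ⁻¹' {i} ∧ IsHomog G H ∧
      (f ⁻¹' {i}).ncard - 1 ≤ 2 ^ (k - 1) * H.ncard := by
  classical
  obtain ⟨C, hC, hI⟩ := hG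
  have hP := hf i
  have hCP := hC.ncard_diff_fiber_le hf i
  generalize f ⁻¹' {i} = P at hP hCP ⊢
  obtain ⟨H, hHQ, hQH, hhom⟩ :=
    G.exists_subset_card_le_two_pow_mul_card_adj_all_or_none (C \ P).toFinset (P \ C).toFinset
  have hH : (H : Set V) ⊆ P \ C := fun v hv => Set.mem_toFinset.1 (hHQ hv)
  refine ⟨H, hH.trans Set.sdiff_subset,
    SimpleGraph.isHomog_of_subset_diff hP hI hH fun s hs => hhom s (Set.mem_toFinset.2 hs), ?_⟩
  rw [← Set.ncard_eq_toFinset_card', ← Set.ncard_eq_toFinset_card'] at hQH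
  rw [Set.ncard_coe_finset]
  have hPC := SimpleGraph.ncard_le_ncard_diff_add_one hP hC
  calc P.ncard - 1 ≤ (P \ C).ncard := by omega
    _ ≤ 2 ^ (C \ P).ncard * #H := hQH
    _ ≤ 2 ^ (k - 1) * #H :=
        Nat.mul_le_mul_right _ (Nat.pow_le_pow_right two_pos hCP)
end

section
/- Let G be a split graph whose vertex set is partitioned into ℓ cliques Q_1, ..., Q_ℓ. Then for each part Q_i there is a subset H ⊆ Q_i with |H| ≥ (|Q_i| - 1) / 2^(ℓ-1) such that H is homogeneous in G. -/
variable {V : Type*}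

/-! Let `C` be the clique and `Cᶜ` the independent set of the split partition, and `Q = f⁻¹' {i}`.
Every vertex of `Q ∪ C` is adjacent to all of `Q ∩ C`, and `Q` meets `Cᶜ` in at most one vertex.
The remaining vertices, those of `Cᶜ \ Q`, lie in pairwise distinct cliques `f⁻¹' {j}` with
`j ≠ i`, so there are at most `ℓ - 1` of them; splitting `Q ∩ C` by the neighbourhood of each
of them in turn and keeping the larger half leaves a homogeneous set of size at least
`|Q ∩ C| / 2 ^ (ℓ - 1)`. -/

theorem Set.exists_subset_subset_or_subset_compl_ncard_le (Q P : Set V) :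
    ∃ Q' ⊆ Q, (Q' ⊆ P ∨ Q' ⊆ Pᶜ) ∧ Q.ncard ≤ 2 * Q'.ncard := by
  have hcard : Q.ncard ≤ (Q ∩ P).ncard + (Q \ P).ncard := by
    conv_lhs => rw [← Q.inter_union_sdiff P]
    exact Set.ncard_union_le _ _
  rcases le_total (Q ∩ P).ncard (Q \ P).ncard with h | h
  · exact ⟨Q \ P, Set.sdiff_subset, Or.inr fun _ hq => hq.2, by omega⟩
  · exact ⟨Q ∩ P, Set.inter_subset_left, Or.inl fun _ hq => hq.2, by omega⟩

theorem IsIndep.injOn_of_isClique_fiber {G : SimpleGraph V} {s : Set V} {ι : Type*}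
    {f : V → ι} (hs : IsIndep G s) (hf : ∀ j, G.IsClique (f ⁻¹' {j})) : Set.InjOn f s :=
  fun u hu v hv huv => by
    by_contra hne
    exact hs hu hv hne (hf (f u) rfl huv.symm hne)

theorem IsIndep.ncard_le_ncard_inter_add_one {G : SimpleGraph V} {C Q : Set V}
    (hI : IsIndep G Cᶜ) (hQ : G.IsClique Q) : Q.ncard ≤ (Q ∩ C).ncard + 1 := by
  have hsub : (Q ∩ Cᶜ).Subsingleton := fun u hu v hv => by
    by_contra huv
    exact hI hu.2 hv.2 huv (hQ hu.1 hv.1 huv)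
  calc Q.ncard ≤ (Q ∩ C).ncard + (Q ∩ Cᶜ).ncard := by
        conv_lhs => rw [← Q.inter_union_sdiff C]
        exact Set.ncard_union_le _ _
    _ ≤ (Q ∩ C).ncard + 1 := by
        gcongr
        exact (Set.ncard_le_one_iff hsub.finite).2 fun hu hv => hsub hu hv

namespace SimpleGraph

theorem exists_subset_homog_wrt_of_finite (G : SimpleGraph V) {B : Set V} (hB : B.Finite)
    (Q : Set V) :
    ∃ H ⊆ Q, (∀ b ∈ B, (∀ h ∈ H, G.Adj b h) ∨ (∀ h ∈ H, ¬ G.Adj b h)) ∧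
      Q.ncard ≤ 2 ^ B.ncard * H.ncard := by
  induction B, hB using Set.Finite.induction_on generalizing Q with
  | empty => exact ⟨Q, subset_rfl, by simp, by simp⟩
  | @insert b B hb hB ih =>
    obtain ⟨Q', hQ'Q, hbQ', hQQ'⟩ :=
      Q.exists_subset_subset_or_subset_compl_ncard_le (G.neighborSet b)
    obtain ⟨H, hHQ', hBH, hQ'H⟩ := ih Q'
    refine ⟨H, hHQ'.trans hQ'Q, ?_, ?_⟩
    · rintro c (rfl | hc)
      · exact hbQ'.imp (fun hP h hh => hP (hHQ' hh)) (fun hP h hh => hP (hHQ' hh))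
      · exact hBH c hc
    · rw [Set.ncard_insert_of_notMem hb hB, pow_succ']
      calc Q.ncard ≤ 2 * Q'.ncard := hQQ'
        _ ≤ 2 * (2 ^ B.ncard * H.ncard) := by gcongr
        _ = 2 * 2 ^ B.ncard * H.ncard := by ring

theorem IsClique.isHomog_of_subset_inter {G : SimpleGraph V} {Q C H : Set V}
    (hQ : G.IsClique Q) (hC : G.IsClique C) (hH : H ⊆ Q ∩ C)
    (hout : ∀ v ∈ Cᶜ \ Q, (∀ h ∈ H, G.Adj v h) ∨ (∀ h ∈ H, ¬ G.Adj v h)) :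
    IsHomog G H := by
  intro v hvH
  by_cases hvQ : v ∈ Q
  · exact Or.inl fun h hh => hQ hvQ (hH hh).1 fun hvh => hvH (hvh ▸ hh)
  by_cases hvC : v ∈ C
  · exact Or.inl fun h hh => hC hvC (hH hh).2 fun hvh => hvH (hvh ▸ hh)
  exact hout v ⟨hvC, hvQ⟩

end SimpleGraph

theorem stmt1_general {V : Type*} (G : SimpleGraph V) (hG : IsSplit G)
    (ℓ : ℕ) (f : V → Fin ℓ) (hf : ∀ i : Fin ℓ, G.IsClique (f ⁻¹' {i})) (i : Fin ℓ) :
    ∃ H : Set V, H ⊆ f ⁻¹' {i} ∧ IsHomog G H ∧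
      (f ⁻¹' {i}).ncard - 1 ≤ 2 ^ (ℓ - 1) * H.ncard := by
  obtain ⟨C, hC, hI⟩ := hG
  set Q := f ⁻¹' {i}
  have hinj : Set.InjOn f (Cᶜ \ Q) := (hI.injOn_of_isClique_fiber hf).mono Set.sdiff_subset
  have hBfin : (Cᶜ \ Q).Finite := .of_finite_image (Set.toFinite _) hinj
  have hBcard : (Cᶜ \ Q).ncard ≤ ℓ - 1 :=
    calc (Cᶜ \ Q).ncard ≤ ({i}ᶜ : Set (Fin ℓ)).ncard :=
          Set.ncard_le_ncard_of_injOn f (fun v hv => hv.2) hinj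
      _ = ℓ - 1 := by rw [Set.ncard_compl]; simp
  obtain ⟨H, hHQC, hout, hcard⟩ := G.exists_subset_homog_wrt_of_finite hBfin (Q ∩ C)
  refine ⟨H, hHQC.trans Set.inter_subset_left, (hf i).isHomog_of_subset_inter hC hHQC hout, ?_⟩
  calc Q.ncard - 1 ≤ (Q ∩ C).ncard := by
        have : Q.ncard ≤ (Q ∩ C).ncard + 1 := hI.ncard_le_ncard_inter_add_one (hf i)
        omega
    _ ≤ 2 ^ (Cᶜ \ Q).ncard * H.ncard := hcard
    _ ≤ 2 ^ (ℓ - 1) * H.ncard := by gcongr; norm_num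

/-- in a split graph partitioned into `ℓ` cliques by `f`, each part `Q_i`
contains a homogeneous set `H` with `|H| ≥ (|Q_i| - 1) / 2^(ℓ-1)`. -/
theorem stmt1 {V : Type*} [Fintype V] (G : SimpleGraph V) (hG : IsSplit G)
    (ℓ : ℕ) (f : V → Fin ℓ) (hf : ∀ i : Fin ℓ, G.IsClique (f ⁻¹' {i})) (i : Fin ℓ) :
    ∃ H : Set V, H ⊆ f ⁻¹' {i} ∧ IsHomog G H ∧
      (f ⁻¹' {i}).ncard - 1 ≤ 2 ^ (ℓ - 1) * H.ncard :=
  stmt1_general G hG ℓ f hf i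
end

section
/- Let G be a graph, and suppose G contains an independent homogeneous set H with |H| ≥ k + 2. Suppose further that for every vertex w ∈ H, the graph G - w admits a partition of its vertex set into at most k independent sets and at most ℓ ≤ k cliques such that vertices in the same independent part have identical constraints. If additionally whenever some vertex w' ∈ H \ {w} lies in an independent part P' of the partition of G - w, the vertex w can be added to P' to yield a valid partition of G, then G admits such a partition. Concretely: if H is an independent homogeneous set of size ≥ k+2 in G, ℓ ≤ k, and G - w admits a partition into k independent sets and ℓ cliques for some w ∈ H, then some two vertices of H lie in the same class type, forcing at least one vertex of H \ {w} into an independent part. -/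
variable {V : Type*}

/-! If `G - w` has a partition into `k` independent sets and `ℓ ≤ k` cliques, the `k + 1`
pairwise nonadjacent vertices of `H \ {w}` cannot all lie in clique parts, since a clique part
holds at most one of them. So some `w' ∈ H \ {w}` lies in an independent part `P`. Every vertex
of `P` outside `H` is nonadjacent to `w'`, hence by homogeneity to all of `H`, in particular to
`w`; so `w` can be added to `P`. -/

section

variable {G : SimpleGraph V}

theorem IsIndep.preimage_val {H : Set V} (hH : IsIndep G H) (s : Set V) :
    IsIndep (G.induce s) (Subtype.val ⁻¹' H) :=
  fun _ hx _ hy hxy => hH hx hy (Subtype.val_injective.ne hxy)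

theorem IsIndep.image_val {s : Set V} {P : Set s} (hP : IsIndep (G.induce s) P) :
    IsIndep G (Subtype.val '' P) := by
  rintro _ ⟨x, hx, rfl⟩ _ ⟨y, hy, rfl⟩ hxy
  exact hP hx hy (Subtype.val_injective.ne_iff.mp hxy)

theorem Fin.ncard_setOf_le_val (k ℓ : ℕ) : {i : Fin (k + ℓ) | k ≤ (i : ℕ)}.ncard = ℓ := by
  rw [← Fin.range_natAdd, Set.ncard_range_of_injective (Fin.natAdd_injective ℓ k),
    Nat.card_eq_fintype_card, Fintype.card_fin]

theorem IsKLPartition.exists_mem_lt_of_isIndep {k ℓ : ℕ} {f : V → Fin (k + ℓ)}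
    (hf : IsKLPartition G k ℓ f) {S : Set V} (hS : IsIndep G S) (hcard : ℓ < S.ncard) :
    ∃ v ∈ S, (f v : ℕ) < k := by
  by_contra! hclique
  have hinj : S.InjOn f := by
    intro x hx y hy hxy
    by_contra hne
    have hpart := hf (f x)
    rw [if_neg (hclique x hx).not_gt] at hpart
    exact hS hx hy hne (hpart rfl hxy.symm hne)
  have := Set.ncard_le_ncard_of_injOn (t := {i : Fin (k + ℓ) | k ≤ (i : ℕ)}) f hclique hinj
    (Set.toFinite _)
  rw [Fin.ncard_setOf_le_val] at this
  omega

theorem IsHomog.not_adj_of_mem_isIndep {H P : Set V} (hind : IsIndep G H) (hhom : IsHomog G H)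
    (hP : IsIndep G P) {w w' v : V} (hw : w ∈ H) (hw'H : w' ∈ H) (hw'P : w' ∈ P) (hv : v ∈ P) :
    ¬ G.Adj w v := by
  by_cases hvH : v ∈ H
  · by_cases hwv : w = v
    · exact hwv ▸ G.irrefl
    · exact hind hw hvH hwv
  · rcases hhom v hvH with hall | hnone
    · exact absurd (hall w' hw'H) (hP hv hw'P fun h => hvH (h ▸ hw'H))
    · exact fun h => hnone w hw h.symm

theorem IsKLPartition.extend_of_forall_not_adj [DecidableEq V] {k ℓ : ℕ} {w : V}
    {f : ({w}ᶜ : Set V) → Fin (k + ℓ)} (hf : IsKLPartition (G.induce {w}ᶜ) k ℓ f)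
    {i : Fin (k + ℓ)} (hi : (i : ℕ) < k) (hw : ∀ v, f v = i → ¬ G.Adj w v) :
    IsKLPartition G k ℓ fun v => if h : v = w then i else f ⟨v, h⟩ := by
  intro j
  split_ifs with hj
  · have hpart := hf j
    rw [if_pos hj] at hpart
    intro u hu v hv huv
    simp only [Set.mem_preimage, Set.mem_singleton_iff] at hu hv
    rcases eq_or_ne u w with rfl | huw
    · rw [dif_pos rfl] at hu
      rw [dif_neg (Ne.symm huv)] at hv
      exact hw _ (hv.trans hu.symm)
    rcases eq_or_ne v w with rfl | hvw
    · rw [dif_pos rfl] at hv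
      rw [dif_neg huw] at hu
      exact fun h => hw _ (hu.trans hv.symm) h.symm
    rw [dif_neg huw] at hu
    rw [dif_neg hvw] at hv
    exact hpart hu hv (Subtype.coe_ne_coe.mp huv)
  · have hpart := hf j
    rw [if_neg hj] at hpart
    have hne : ∀ u, (if h : u = w then i else f ⟨u, h⟩) = j → u ≠ w := by
      rintro u hu rfl
      rw [dif_pos rfl] at hu
      exact hj (hu ▸ hi)
    intro u hu v hv huv
    have huw := hne u hu
    have hvw := hne v hv
    simp only [Set.mem_preimage, Set.mem_singleton_iff, dif_neg huw, dif_neg hvw] at hu hv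
    exact hpart hu hv (Subtype.coe_ne_coe.mp huv)

end

theorem stmt3_general {V : Type*} (G : SimpleGraph V) (H : Set V) (k ℓ : ℕ)
    (hkl : ℓ ≤ k) (hind : IsIndep G H) (hhom : IsHomog G H) (hcard : k + 2 ≤ H.ncard)
    (w : V) (hw : w ∈ H)
    (f : ({w}ᶜ : Set V) → Fin (k + ℓ)) (hf : IsKLPartition (G.induce {w}ᶜ) k ℓ f) :
    (∃ w' : ({w}ᶜ : Set V), (w' : V) ∈ H ∧ ((f w' : Fin (k + ℓ)) : ℕ) < k) ∧
      ∃ g : V → Fin (k + ℓ), IsKLPartition G k ℓ g := by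
  classical
  have hHfin : H.Finite := Set.finite_of_ncard_pos (by omega)
  have hmany : ℓ < (Subtype.val ⁻¹' H : Set ({w}ᶜ : Set V)).ncard := by
    have hsdiff := Set.ncard_sdiff_singleton_add_one hw hHfin
    rw [← Set.ncard_image_of_injective _ Subtype.val_injective, Subtype.image_preimage_coe,
      Set.inter_comm, ← Set.sdiff_eq]
    omega
  obtain ⟨w', hw'H, hw'k⟩ := hf.exists_mem_lt_of_isIndep (hind.preimage_val _) hmany
  have hpart : IsIndep G (Subtype.val '' (f ⁻¹' {f w'})) := by
    have hpart := hf (f w')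
    rw [if_pos hw'k] at hpart
    exact hpart.image_val
  refine ⟨⟨w', hw'H, hw'k⟩, _, hf.extend_of_forall_not_adj hw'k fun v hv => ?_⟩
  exact hhom.not_adj_of_mem_isIndep hind hpart hw hw'H ⟨w', rfl, rfl⟩ ⟨v, hv, rfl⟩

/-- if `H` is an independent homogeneous set of size `≥ k+2` in `G`,
`ℓ ≤ k`, and for some `w ∈ H` the graph `G - w` has a partition into `k` independent
sets and `ℓ` cliques, then some vertex of `H \ {w}` lies in an independent part, and
`G` itself admits a partition into `k` independent sets and `ℓ` cliques. -/
theorem stmt3 {V : Type*} [Fintype V] (G : SimpleGraph V) (H : Set V) (k ℓ : ℕ)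
    (hkl : ℓ ≤ k) (hind : IsIndep G H) (hhom : IsHomog G H) (hcard : k + 2 ≤ H.ncard)
    (w : V) (hw : w ∈ H)
    (f : ({w}ᶜ : Set V) → Fin (k + ℓ)) (hf : IsKLPartition (G.induce {w}ᶜ) k ℓ f) :
    (∃ w' : ({w}ᶜ : Set V), (w' : V) ∈ H ∧ ((f w' : Fin (k + ℓ)) : ℕ) < k) ∧
      ∃ g : V → Fin (k + ℓ), IsKLPartition G k ℓ g :=
  stmt3_general G H k ℓ hkl hind hhom hcard w hw f hf
end

section
/- Every split minimal M-obstruction, for M an m×m matrix over {0,1} (no asterisks) with k diagonal zeros and ℓ ≤ k diagonal ones (k+ℓ = m), has at most 2^(k-1)·(k+ℓ)·(2k+3) + 1 vertices. -/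
/-!
Fix a vertex `v` of a minimal obstruction `G` and an `M`-partition `f` of `G - v`. Since `M` has
no asterisks, adjacency in `G - v` is determined by the parts, so the vertices of a part `i`
that agree on their adjacency to `v` are pairwise twins, forming a clique or an independent set
according to the diagonal entry `M i i = c`. If such a twin class `T` had at least
`#{j | M j j = ¬c} + 2` vertices, then deleting one twin `b` and partitioning `G - b` would leave,
by pigeonhole, another twin in a part of diagonal type `c`; putting `b` into that part as well
partitions `G`. Hence each of the `2m` classes has at most `max k ℓ + 1 = k + 1` vertices, so
`|V(G)| ≤ 2 (k + ℓ)(k + 1) + 1`, which is below the stated bound.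
-/

variable {V : Type*}

variable {m : ℕ} {M : Matrix (Fin m) (Fin m) (Option Bool)} {G : SimpleGraph V}

lemma eq_some_not_of_ne_none_of_ne {x : Option Bool} {c : Bool} (h0 : x ≠ none)
    (hc : x ≠ some c) : x = some !c := by
  rcases x with _ | _ | _ <;> cases c <;> simp_all

def diagCount (M : Matrix (Fin m) (Fin m) (Option Bool)) (c : Bool) : ℕ :=
  (Finset.univ.filter fun i : Fin m => M i i = some c).card

/-- For a matrix without asterisks, this says that `f` restricts to an `M`-partition of `G - v`. -/
def IsMPartitionOff (M : Matrix (Fin m) (Fin m) (Option Bool)) (G : SimpleGraph V) (v : V)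
    (f : V → Fin m) : Prop :=
  ∀ u w, u ≠ v → w ≠ v → u ≠ w → (G.Adj u w ↔ M (f u) (f w) = some true)

lemma IsMPartition.adj_iff (hnoast : ∀ i j, M i j ≠ none) {f : V → Fin m}
    (hf : IsMPartition M G f) {u w : V} (huw : u ≠ w) :
    G.Adj u w ↔ M (f u) (f w) = some true := by
  refine ⟨fun hadj => ?_, (hf u w huw).1⟩
  by_contra hne
  exact (hf u w huw).2 (eq_some_not_of_ne_none_of_ne (hnoast _ _) hne) hadj

lemma isMPartition_of_adj_iff {f : V → Fin m}
    (h : ∀ u w, u ≠ w → (G.Adj u w ↔ M (f u) (f w) = some true)) : IsMPartition M G f :=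
  fun u w huw => ⟨(h u w huw).2, fun hM hadj => by simpa [hM] using (h u w huw).1 hadj⟩

lemma exists_isMPartitionOff (hnoast : ∀ i j, M i j ≠ none) {v w₀ : V} (hw₀ : w₀ ≠ v)
    (h : HasMPartition M (G.induce {v}ᶜ)) : ∃ f : V → Fin m, IsMPartitionOff M G v f := by
  classical
  obtain ⟨g, hg⟩ := h
  refine ⟨fun w => if hw : w = v then g ⟨w₀, hw₀⟩ else g ⟨w, hw⟩, fun u w hu hw huw => ?_⟩
  simpa [hu, hw] using hg.adj_iff hnoast (u := ⟨u, hu⟩) (w := ⟨w, hw⟩) (fun h => huw (congrArg Subtype.val h))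

lemma IsMPartitionOff.isMPartition_update [DecidableEq V] (hsym : M.IsSymm) {v : V}
    {f : V → Fin m} (hf : IsMPartitionOff M G v f) {j : Fin m}
    (hv : ∀ w, w ≠ v → (G.Adj v w ↔ M j (f w) = some true)) :
    IsMPartition M G (Function.update f v j) := by
  refine isMPartition_of_adj_iff fun u w huw => ?_
  by_cases hu : u = v
  · subst hu
    simpa [Function.update_of_ne (Ne.symm huw)] using hv w (Ne.symm huw)
  by_cases hw : w = v
  · subst hw
    simpa [Function.update_of_ne hu, G.adj_comm, hsym.apply] using hv u hu
  · simpa [Function.update_of_ne hu, Function.update_of_ne hw] using hf u w hu hw huw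

lemma IsMPartitionOff.exists_diag_eq (hnoast : ∀ i j, M i j ≠ none) {v : V} {f : V → Fin m}
    (hf : IsMPartitionOff M G v f) {c : Bool} {S : Finset V} (hvS : v ∉ S)
    (hS : ∀ a ∈ S, ∀ b ∈ S, a ≠ b → (G.Adj a b ↔ c = true))
    (hcard : diagCount M (!c) < S.card) : ∃ t ∈ S, M (f t) (f t) = some c := by
  by_contra! hne
  have hdiag : ∀ t ∈ S, M (f t) (f t) = some !c := fun t ht =>
    eq_some_not_of_ne_none_of_ne (hnoast _ _) (hne t ht)
  obtain ⟨x, hx, y, hy, hxy, hfxy⟩ := Finset.exists_ne_map_eq_of_card_lt_of_maps_to hcard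
    (f := f) fun t ht => by simpa using hdiag t ht
  have hadj := (hS x hx y hy hxy).symm.trans
    (hf x y (ne_of_mem_of_not_mem hx hvS) (ne_of_mem_of_not_mem hy hvS) hxy)
  rw [← hfxy, hdiag x hx] at hadj
  cases c <;> simp at hadj

theorem hasMPartition_of_twins (hsym : M.IsSymm) (hnoast : ∀ i j, M i j ≠ none)
    (hdel : ∀ v : V, HasMPartition M (G.induce {v}ᶜ)) (c : Bool) (T : Finset V)
    (hTadj : ∀ a ∈ T, ∀ b ∈ T, a ≠ b → (G.Adj a b ↔ c = true))
    (hTtwin : ∀ a ∈ T, ∀ b ∈ T, ∀ w, w ≠ a → w ≠ b → (G.Adj a w ↔ G.Adj b w))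
    (hcard : diagCount M (!c) + 2 ≤ T.card) : HasMPartition M G := by
  classical
  obtain ⟨b, hb⟩ : T.Nonempty := Finset.card_pos.mp (by omega)
  have hS : diagCount M (!c) < (T.erase b).card := by
    rw [Finset.card_erase_of_mem hb]; omega
  obtain ⟨t₁, ht₁⟩ : (T.erase b).Nonempty := Finset.card_pos.mp (by omega)
  obtain ⟨f, hf⟩ := exists_isMPartitionOff hnoast (Finset.ne_of_mem_erase ht₁) (hdel b)
  obtain ⟨t, ht, hdiag⟩ := hf.exists_diag_eq hnoast (Finset.notMem_erase b T)
    (fun x hx y hy => hTadj x (Finset.mem_of_mem_erase hx) y (Finset.mem_of_mem_erase hy)) hS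
  have htb := Finset.ne_of_mem_erase ht
  have htT := Finset.mem_of_mem_erase ht
  refine ⟨_, hf.isMPartition_update hsym (j := f t) fun w hwb => ?_⟩
  by_cases hwt : w = t
  · subst hwt
    rw [hTadj b hb w htT (Ne.symm hwb), hdiag]
    cases c <;> simp
  · rw [hTtwin b hb t htT w hwb hwt]
    exact hf t w htb hwb (Ne.symm hwt)

theorem IsMinimalMObstruction.card_twinClass_le (hsym : M.IsSymm) (hnoast : ∀ i j, M i j ≠ none)
    (hobs : IsMinimalMObstruction M G) {v : V} {f : V → Fin m} (hf : IsMPartitionOff M G v f)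
    {i : Fin m} {b : Bool} {T : Finset V}
    (hT : ∀ w ∈ T, w ≠ v ∧ f w = i ∧ (G.Adj v w ↔ b = true)) :
    T.card ≤ max (diagCount M false) (diagCount M true) + 1 := by
  obtain ⟨c, hc⟩ := Option.ne_none_iff_exists'.mp (hnoast i i)
  have hTadj : ∀ x ∈ T, ∀ y ∈ T, x ≠ y → (G.Adj x y ↔ c = true) := by
    intro x hx y hy hxy
    obtain ⟨hxv, hfx, -⟩ := hT x hx
    obtain ⟨hyv, hfy, -⟩ := hT y hy
    rw [hf x y hxv hyv hxy, hfx, hfy, hc]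
    cases c <;> simp
  have hTtwin : ∀ x ∈ T, ∀ y ∈ T, ∀ w, w ≠ x → w ≠ y → (G.Adj x w ↔ G.Adj y w) := by
    intro x hx y hy w hwx hwy
    obtain ⟨hxv, hfx, hvx⟩ := hT x hx
    obtain ⟨hyv, hfy, hvy⟩ := hT y hy
    by_cases hwv : w = v
    · subst hwv
      rw [G.adj_comm x, G.adj_comm y, hvx, hvy]
    · rw [hf x w hxv hwv (Ne.symm hwx), hf y w hyv hwv (Ne.symm hwy), hfx, hfy]
  have hle : diagCount M (!c) ≤ max (diagCount M false) (diagCount M true) := by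
    cases c <;> simp
  by_contra! hlt
  exact hobs.1 (hasMPartition_of_twins hsym hnoast hobs.2 c T hTadj hTtwin (by omega))

theorem IsMinimalMObstruction.card_le [Fintype V] (hsym : M.IsSymm)
    (hnoast : ∀ i j, M i j ≠ none) (hobs : IsMinimalMObstruction M G) :
    Fintype.card V ≤ 2 * m * (max (diagCount M false) (diagCount M true) + 1) + 1 := by
  classical
  rcases le_or_gt (Fintype.card V) 1 with hV | hV
  · omega
  obtain ⟨v, w₀, hvw₀⟩ := Fintype.exists_pair_of_one_lt_card hV
  obtain ⟨f, hf⟩ := exists_isMPartitionOff hnoast (Ne.symm hvw₀) (hobs.2 v)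
  have hcard := Finset.card_le_mul_card_image_of_maps_to (s := Finset.univ.erase v)
    (t := Finset.univ) (f := fun w => (f w, decide (G.Adj v w))) (by simp) _
    fun p _ => hobs.card_twinClass_le hsym hnoast hf (i := p.1) (b := p.2) fun w hw => by
      simp only [Finset.mem_filter, Finset.mem_erase, Prod.ext_iff] at hw
      exact ⟨hw.1.1, hw.2.1, by rw [← hw.2.2]; simp⟩
  rw [Finset.card_erase_of_mem (Finset.mem_univ v), Finset.card_univ, Finset.card_univ,
    Fintype.card_prod, Fintype.card_fin, Fintype.card_bool] at hcard
  have hcomm : (max (diagCount M false) (diagCount M true) + 1) * (m * 2) =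
      2 * m * (max (diagCount M false) (diagCount M true) + 1) := by ring
  omega

lemma two_mul_add_mul_succ_le (k ℓ : ℕ) :
    2 * (k + ℓ) * (k + 1) ≤ 2 ^ (k - 1) * (k + ℓ) * (2 * k + 3) :=
  calc 2 * (k + ℓ) * (k + 1) = (k + ℓ) * (2 * k + 2) := by ring
    _ ≤ (k + ℓ) * (2 ^ (k - 1) * (2 * k + 3)) := by
        gcongr
        exact le_trans (by omega) (Nat.le_mul_of_pos_left _ (Nat.two_pow_pos _))
    _ = 2 ^ (k - 1) * (k + ℓ) * (2 * k + 3) := by ring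

theorem stmt6_general {m : ℕ} (M : Matrix (Fin m) (Fin m) (Option Bool)) (hsym : M.IsSymm)
    (hnoast : ∀ i j, M i j ≠ none) (k ℓ : ℕ)
    (hk : k = (Finset.univ.filter fun i : Fin m => M i i = some false).card)
    (hl : ℓ = (Finset.univ.filter fun i : Fin m => M i i = some true).card)
    (hkl : ℓ ≤ k) (hm : k + ℓ = m)
    {V : Type*} [Fintype V] (G : SimpleGraph V)
    (hobs : IsMinimalMObstruction M G) :
    Fintype.card V ≤ 2 ^ (k - 1) * (k + ℓ) * (2 * k + 3) + 1 := by
  have hmax : max (diagCount M false) (diagCount M true) = k := by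
    rw [diagCount, diagCount, ← hk, ← hl, max_eq_left hkl]
  calc Fintype.card V ≤ 2 * m * (max (diagCount M false) (diagCount M true) + 1) + 1 :=
        hobs.card_le hsym hnoast
    _ = 2 * (k + ℓ) * (k + 1) + 1 := by rw [hmax, hm]
    _ ≤ 2 ^ (k - 1) * (k + ℓ) * (2 * k + 3) + 1 :=
        Nat.add_le_add_right (two_mul_add_mul_succ_le k ℓ) 1

/-- for an `m×m` symmetric matrix `M` over `{0,1}` (no asterisks) with
`k` diagonal zeros and `ℓ ≤ k` diagonal ones (`k + ℓ = m`), every split minimal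
`M`-obstruction has at most `2^(k-1)·(k+ℓ)·(2k+3) + 1` vertices. -/
theorem stmt6 {m : ℕ} (M : Matrix (Fin m) (Fin m) (Option Bool)) (hsym : M.IsSymm)
    (hnoast : ∀ i j, M i j ≠ none) (k ℓ : ℕ)
    (hk : k = (Finset.univ.filter fun i : Fin m => M i i = some false).card)
    (hl : ℓ = (Finset.univ.filter fun i : Fin m => M i i = some true).card)
    (hkl : ℓ ≤ k) (hm : k + ℓ = m)
    {V : Type*} [Fintype V] (G : SimpleGraph V)
    (hsplit : IsSplit G) (hobs : IsMinimalMObstruction M G) :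
    Fintype.card V ≤ 2 ^ (k - 1) * (k + ℓ) * (2 * k + 3) + 1 :=
  stmt6_general M hsym hnoast k ℓ hk hl hkl hm G hobs
end

section
/- For every m×m matrix M over {0,1,*} with no diagonal asterisks, the class of split graphs that are minimal M-obstructions is finite (up to isomorphism). -/
/-!
If some entry of `M` between a part with diagonal `0` and a part with diagonal `1` is `*`, every
split graph is `M`-partitionable: put the clique into the `1`-part and the independent set into
the `0`-part. Otherwise fix a split `C ∪ Cᶜ` of a minimal obstruction `G` and an `M`-partition of
`G - v`. Call a vertex aligned when the diagonal entry of its part matches its side. Misaligned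
vertices other than `v` lie in distinct parts on each side, so there are at most `2m + 1` of them,
and adjacency between aligned vertices depends only on their parts. Hence aligned vertices with
the same part and the same neighbours among the misaligned ones are twins. Minimality bounds any
set of pairwise twins by `m + 1`: delete one of them, two others then share a part, and the
deleted vertex can join that part.
-/

variable {V : Type*}

open Finset

def AreTwins (G : SimpleGraph V) (x y : V) : Prop :=
  ∀ z, z ≠ x → z ≠ y → (G.Adj x z ↔ G.Adj y z)

def IsMPartitionOn {m : ℕ} (M : Matrix (Fin m) (Fin m) (Option Bool)) (G : SimpleGraph V)
    (s : Set V) (f : V → Fin m) : Prop :=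
  ∀ a ∈ s, ∀ b ∈ s, a ≠ b → ∀ c, M (f a) (f b) = some c → (G.Adj a b ↔ c = true)

section Partitions

variable {m : ℕ} {M : Matrix (Fin m) (Fin m) (Option Bool)} {G : SimpleGraph V}
  {s : Set V} {f : V → Fin m}

lemma isMPartition_iff_isMPartitionOn_univ :
    IsMPartition M G f ↔ IsMPartitionOn M G Set.univ f := by
  refine forall_congr' fun a => ?_
  simp only [Set.mem_univ, true_imp_iff]
  refine forall_congr' fun b => imp_congr_right fun _ => ?_
  cases M (f a) (f b) with
  | none => simp
  | some c => cases c <;> simp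

lemma HasMPartition.exists_isMPartitionOn (h : HasMPartition M (G.induce s)) {a : V}
    (ha : a ∈ s) : ∃ f, IsMPartitionOn M G s f := by
  obtain ⟨g, hg⟩ := h
  set f := Function.extend Subtype.val g fun _ => g ⟨a, ha⟩
  have hf : ∀ x (hx : x ∈ s), f x = g ⟨x, hx⟩ := fun x hx =>
    Subtype.val_injective.extend_apply g _ ⟨x, hx⟩
  refine ⟨f, fun x hx y hy hxy c hc => ?_⟩
  rw [hf x hx, hf y hy] at hc
  have hne : (⟨x, hx⟩ : s) ≠ ⟨y, hy⟩ := fun h => hxy (congrArg Subtype.val h)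
  have := (isMPartition_iff_isMPartitionOn_univ.mp hg) _ trivial _ trivial hne c hc
  rwa [SimpleGraph.induce_adj] at this

lemma IsMPartitionOn.injOn {S : Set V} (hf : IsMPartitionOn M G s f) (hS : S ⊆ s) {c : Bool}
    (hdiag : ∀ x ∈ S, M (f x) (f x) = some c)
    (hadj : S.Pairwise fun x y => ¬ (G.Adj x y ↔ c = true)) : S.InjOn f := by
  intro x hx y hy hxy
  by_contra hne
  exact hadj hx hy hne (hf x (hS hx) y (hS hy) hne c (hxy ▸ hdiag y hy))

/-- Re-inserting a deleted vertex `u` into the part of two of its twins `v`, `w` that share a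
part: `w` vouches for the pair `u v`, and `v` for every other pair through `u`. -/
lemma IsMPartitionOn.hasMPartition_of_twins {u v w : V} (hf : IsMPartitionOn M G {u}ᶜ f)
    (hvu : v ≠ u) (hwu : w ≠ u) (hvw : v ≠ w) (hfvw : f v = f w)
    (htv : AreTwins G u v) (htw : AreTwins G u w) : HasMPartition M G := by
  classical
  have partner : ∀ y ≠ u, ∃ t ≠ u, t ≠ y ∧ f t = f v ∧ (G.Adj u y ↔ G.Adj t y) := by
    intro y hyu
    by_cases hyv : y = v
    · exact ⟨w, hwu, hyv ▸ hvw.symm, hfvw.symm, htw y hyu (hyv ▸ hvw)⟩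
    · exact ⟨v, hvu, Ne.symm hyv, rfl, htv y hyu hyv⟩
  set g := Function.update f u (f v)
  have hgu : g u = f v := Function.update_self u (f v) f
  have hg : ∀ y ≠ u, g y = f y := fun y hy => Function.update_of_ne hy _ f
  refine ⟨g, isMPartition_iff_isMPartitionOn_univ.mpr fun a _ b _ hab c hc => ?_⟩
  by_cases hau : a = u
  · subst hau
    have hbu : b ≠ a := Ne.symm hab
    obtain ⟨t, htu, htb, hft, hadj⟩ := partner b hbu
    rw [hgu, hg b hbu, ← hft] at hc
    exact hadj.trans (hf t htu b hbu htb c hc)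
  by_cases hbu : b = u
  · subst hbu
    obtain ⟨t, htu, hta, hft, hadj⟩ := partner a hau
    rw [hgu, hg a hau, ← hft] at hc
    rw [G.adj_comm, hadj, G.adj_comm]
    exact hf a hau t htu hta.symm c hc
  · rw [hg a hau, hg b hbu] at hc
    exact hf a hau b hbu hab c hc

lemma IsMinimalMObstruction.card_le_of_pairwise_twins (hG : IsMinimalMObstruction M G)
    {T : Finset V} (hT : (T : Set V).Pairwise (AreTwins G)) : #T ≤ m + 1 := by
  classical
  by_contra! hcard
  obtain ⟨u, hu⟩ : T.Nonempty := card_pos.mp (by omega)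
  have hcard' : #(univ : Finset (Fin m)) < #(T.erase u) := by
    rw [card_erase_of_mem hu, card_univ, Fintype.card_fin]
    omega
  obtain ⟨a, ha⟩ : (T.erase u).Nonempty := card_pos.mp (by omega)
  obtain ⟨f, hf⟩ := (hG.2 u).exists_isMPartitionOn (ne_of_mem_erase ha)
  obtain ⟨v, hv, w, hw, hvw, hfvw⟩ :=
    exists_ne_map_eq_of_card_lt_of_maps_to hcard' (f := f) fun _ _ => mem_coe.mpr (mem_univ _)
  have hvu := ne_of_mem_erase hv
  have hwu := ne_of_mem_erase hw
  exact hG.1 <| hf.hasMPartition_of_twins hvu hwu hvw hfvw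
    (hT hu (mem_of_mem_erase hv) hvu.symm) (hT hu (mem_of_mem_erase hw) hwu.symm)

end Partitions

def IsAligned {m : ℕ} (M : Matrix (Fin m) (Fin m) (Option Bool)) (C s : Set V)
    (f : V → Fin m) (x : V) : Prop :=
  x ∈ s ∧ (x ∈ C → M (f x) (f x) = some true) ∧ (x ∉ C → M (f x) (f x) = some false)

section Split

variable {m : ℕ} {M : Matrix (Fin m) (Fin m) (Option Bool)} {G : SimpleGraph V}
  {s C : Set V} {f : V → Fin m}

lemma IsAligned.mem_of_eq {x y : V} (hx : IsAligned M C s f x) (hy : IsAligned M C s f y)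
    (hxy : f x = f y) (hxC : x ∈ C) : y ∈ C := by
  by_contra hyC
  have h := hy.2.2 hyC
  rw [← hxy, hx.2.1 hxC] at h
  exact Bool.noConfusion (Option.some_inj.mp h)

lemma IsAligned.mem_iff_of_eq {x y : V} (hx : IsAligned M C s f x) (hy : IsAligned M C s f y)
    (hxy : f x = f y) : x ∈ C ↔ y ∈ C :=
  ⟨hx.mem_of_eq hy hxy, hy.mem_of_eq hx hxy.symm⟩

lemma adj_iff_of_isAligned_of_notMem_of_mem
    (hstar : ∀ i j, M i i = some false → M j j = some true → M i j ≠ none)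
    (hf : IsMPartitionOn M G s f) {a a' b b' : V} (ha : IsAligned M C s f a)
    (ha' : IsAligned M C s f a') (hb : IsAligned M C s f b) (hb' : IsAligned M C s f b')
    (haC : a ∉ C) (hbC : b ∈ C) (hfa : f a = f a') (hfb : f b = f b') :
    G.Adj a b ↔ G.Adj a' b' := by
  have ha'C : a' ∉ C := fun h => haC (ha'.mem_of_eq ha hfa.symm h)
  have hb'C : b' ∈ C := hb.mem_of_eq hb' hfb hbC
  obtain ⟨c, hc⟩ := Option.ne_none_iff_exists'.mp (hstar _ _ (ha.2.2 haC) (hb.2.1 hbC))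
  have hab : a ≠ b := fun h => haC (h ▸ hbC)
  have hab' : a' ≠ b' := fun h => ha'C (h ▸ hb'C)
  rw [hf a ha.1 b hb.1 hab c hc, hf a' ha'.1 b' hb'.1 hab' c (hfa ▸ hfb ▸ hc)]

lemma adj_iff_of_isAligned (hstar : ∀ i j, M i i = some false → M j j = some true → M i j ≠ none)
    (hf : IsMPartitionOn M G s f) (hC : G.IsClique C) (hI : IsIndep G Cᶜ) {a a' b b' : V}
    (ha : IsAligned M C s f a) (ha' : IsAligned M C s f a') (hb : IsAligned M C s f b)
    (hb' : IsAligned M C s f b') (hab : a ≠ b) (hab' : a' ≠ b') (hfa : f a = f a')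
    (hfb : f b = f b') : G.Adj a b ↔ G.Adj a' b' := by
  have ha'C := ha.mem_iff_of_eq ha' hfa
  have hb'C := hb.mem_iff_of_eq hb' hfb
  by_cases haC : a ∈ C <;> by_cases hbC : b ∈ C
  · exact iff_of_true (hC haC hbC hab) (hC (ha'C.mp haC) (hb'C.mp hbC) hab')
  · rw [G.adj_comm, G.adj_comm a']
    exact adj_iff_of_isAligned_of_notMem_of_mem hstar hf hb hb' ha ha' hbC haC hfb hfa
  · exact adj_iff_of_isAligned_of_notMem_of_mem hstar hf ha ha' hb hb' haC hbC hfa hfb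
  · exact iff_of_false (hI haC hbC hab) (hI (mt ha'C.mpr haC) (mt hb'C.mpr hbC) hab')

lemma areTwins_of_isAligned (hstar : ∀ i j, M i i = some false → M j j = some true → M i j ≠ none)
    (hf : IsMPartitionOn M G s f) (hC : G.IsClique C) (hI : IsIndep G Cᶜ) {E : Set V}
    (hE : ∀ z ∉ E, IsAligned M C s f z) {x y : V} (hx : IsAligned M C s f x)
    (hy : IsAligned M C s f y) (hfxy : f x = f y) (hxyE : ∀ z ∈ E, G.Adj x z ↔ G.Adj y z) :
    AreTwins G x y := by
  intro z hzx hzy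
  by_cases hz : z ∈ E
  · exact hxyE z hz
  · exact adj_iff_of_isAligned hstar hf hC hI hx hy (hE z hz) (hE z hz) hzx.symm hzy.symm hfxy rfl

lemma card_le_of_not_isAligned (hdiag : ∀ i, M i i ≠ none) {v : V}
    (hf : IsMPartitionOn M G {v}ᶜ f) (hC : G.IsClique C) (hI : IsIndep G Cᶜ) {E : Finset V}
    (hE : ∀ x ∈ E, ¬ IsAligned M C {v}ᶜ f x) : #E ≤ 2 * m + 1 := by
  classical
  have diag : ∀ i c, M i i ≠ some c → M i i = some !c := fun i c h => by
    obtain ⟨d, hd⟩ := Option.ne_none_iff_exists'.mp (hdiag i)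
    cases c <;> cases d <;> simp_all
  have card_le : ∀ (S : Finset V) (c : Bool), (∀ x ∈ S, x ≠ v ∧ M (f x) (f x) = some c) →
      (S : Set V).Pairwise (fun x y => ¬ (G.Adj x y ↔ c = true)) → #S ≤ m := by
    intro S c hS hadj
    simpa using card_le_card_of_injOn (t := univ) f (fun _ _ => mem_coe.mpr (mem_univ _))
      (hf.injOn (fun x hx => (hS x hx).1) (fun x hx => (hS x hx).2) hadj)
  have hin : #((E.erase v).filter (· ∈ C)) ≤ m := by
    refine card_le _ false (fun x hx => ?_) fun x hx y hy hxy => ?_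
    · obtain ⟨⟨hxv, hxE⟩, hxC⟩ := mem_filter.mp hx |>.imp_left mem_erase.mp
      exact ⟨hxv, diag _ true fun h => hE x hxE ⟨hxv, fun _ => h, fun h' => (h' hxC).elim⟩⟩
    · simp only [coe_filter, Set.mem_ofPred_eq] at hx hy
      simpa using hC hx.2 hy.2 hxy
  have hout : #((E.erase v).filter (· ∉ C)) ≤ m := by
    refine card_le _ true (fun x hx => ?_) fun x hx y hy hxy => ?_
    · obtain ⟨⟨hxv, hxE⟩, hxC⟩ := mem_filter.mp hx |>.imp_left mem_erase.mp
      exact ⟨hxv, diag _ false fun h => hE x hxE ⟨hxv, fun h' => (hxC h').elim, fun _ => h⟩⟩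
    · simp only [coe_filter, Set.mem_ofPred_eq] at hx hy
      simpa using hI hx.2 hy.2 hxy
  have := card_filter_add_card_filter_not (s := E.erase v) (· ∈ C)
  have := pred_card_le_card_erase (s := E) (a := v)
  omega

/-- The bound counts `m + 1` twins for each of the `m * 2 ^ #E` possible pairs
(part, neighbours in `E`). -/
lemma IsMinimalMObstruction.card_le_of_isAligned (hobs : IsMinimalMObstruction M G)
    (hstar : ∀ i j, M i i = some false → M j j = some true → M i j ≠ none)
    (hf : IsMPartitionOn M G s f) (hC : G.IsClique C) (hI : IsIndep G Cᶜ) {A E : Finset V}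
    (hA : ∀ x ∈ A, IsAligned M C s f x) (hE : ∀ x ∉ E, IsAligned M C s f x) :
    #A ≤ (m + 1) * (m * 2 ^ #E) := by
  classical
  set κ : V → Fin m × Finset V := fun x => (f x, E.filter (G.Adj x))
  have hfibre : ∀ t ∈ A.image κ, #(A.filter (κ · = t)) ≤ m + 1 := by
    refine fun t _ => hobs.card_le_of_pairwise_twins fun x hx y hy _ => ?_
    simp only [coe_filter, Set.mem_ofPred_eq] at hx hy
    have hκ : κ x = κ y := hx.2.trans hy.2.symm
    refine areTwins_of_isAligned hstar hf hC hI (E := E) (fun z hz => hE z hz) (hA x hx.1)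
      (hA y hy.1) (congrArg Prod.fst hκ) fun z hz => ?_
    simpa [κ, mem_coe.mp hz] using congrArg (z ∈ ·.2) hκ
  have himage : A.image κ ⊆ univ ×ˢ E.powerset := fun t ht => by
    obtain ⟨x, -, rfl⟩ := mem_image.mp ht
    exact mem_product.mpr ⟨mem_univ _, mem_powerset.mpr (filter_subset _ _)⟩
  calc #A ≤ (m + 1) * #(A.image κ) := card_le_mul_card_image A _ hfibre
    _ ≤ (m + 1) * (m * 2 ^ #E) := by
      grw [card_le_card himage, card_product, card_powerset, card_univ, Fintype.card_fin]

lemma IsMinimalMObstruction.card_le_of_isSplit [Fintype V] (hdiag : ∀ i, M i i ≠ none)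
    (hstar : ∀ i j, M i i = some false → M j j = some true → M i j ≠ none)
    (hobs : IsMinimalMObstruction M G) (hG : IsSplit G) :
    Fintype.card V ≤ (m + 1) * (m * 2 ^ (2 * m + 1)) + (2 * m + 1) := by
  classical
  obtain ⟨C, hC, hI⟩ := hG
  rcases subsingleton_or_nontrivial V with hV | ⟨v, w, hvw⟩
  · have := Fintype.card_le_one_iff_subsingleton.mpr hV
    omega
  obtain ⟨f, hf⟩ := (hobs.2 v).exists_isMPartitionOn (Set.mem_compl_singleton_iff.mpr hvw.symm)
  set E := univ.filter fun x => ¬ IsAligned M C {v}ᶜ f x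
  have hE : #E ≤ 2 * m + 1 :=
    card_le_of_not_isAligned hdiag hf hC hI fun x hx => (mem_filter.mp hx).2
  have hA := hobs.card_le_of_isAligned hstar hf hC hI (A := univ.filter (IsAligned M C {v}ᶜ f))
    (E := E) (fun x hx => (mem_filter.mp hx).2) fun x hx => by simpa [E] using hx
  rw [← card_univ, ← card_filter_add_card_filter_not (IsAligned M C {v}ᶜ f)]
  grw [hA, hE]
  norm_num

lemma hasMPartition_of_isSplit (hsym : M.IsSymm) {i j : Fin m} (hi : M i i = some false)
    (hj : M j j = some true) (hij : M i j = none) (hG : IsSplit G) : HasMPartition M G := by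
  classical
  obtain ⟨C, hC, hI⟩ := hG
  refine ⟨fun x => if x ∈ C then j else i,
    isMPartition_iff_isMPartitionOn_univ.mpr fun a _ b _ hab c hc => ?_⟩
  have hji : M j i = none := (hsym.apply i j).trans hij
  by_cases ha : a ∈ C <;> by_cases hb : b ∈ C <;> simp only [ha, hb, if_true, if_false] at hc
  · obtain rfl : c = true := Option.some_inj.mp (hc.symm.trans hj)
    exact iff_of_true (hC ha hb hab) rfl
  · simp [hji] at hc
  · simp [hij] at hc
  · obtain rfl : c = false := Option.some_inj.mp (hc.symm.trans hi)
    exact iff_of_false (hI ha hb hab) Bool.false_ne_true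

end Split

/-- for every `m×m` symmetric matrix `M` over `{0,1,*}` with no diagonal
asterisks, there are only finitely many split minimal `M`-obstructions (up to
isomorphism), i.e. their number of vertices is bounded. -/
theorem stmt7 {m : ℕ} (M : Matrix (Fin m) (Fin m) (Option Bool)) (hsym : M.IsSymm)
    (hdiag : ∀ i, M i i ≠ none) :
    ∃ N : ℕ, ∀ (V : Type) [Fintype V] (G : SimpleGraph V),
      IsSplit G → IsMinimalMObstruction M G → Fintype.card V ≤ N := by
  by_cases hstar : ∀ i j, M i i = some false → M j j = some true → M i j ≠ none
  · exact ⟨_, fun V _ G hG hobs => hobs.card_le_of_isSplit hdiag hstar hG⟩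
  · push Not at hstar
    obtain ⟨i, j, hi, hj, hij⟩ := hstar
    exact ⟨0, fun V _ G hG hobs => (hobs.1 (hasMPartition_of_isSplit hsym hi hj hij hG)).elim⟩
end

section
/- Let M = M_{2n+1,n} be the (2n+1)×(2n+1) matrix with all diagonal entries 0, with M(i, 2n+1) = M(2n+1, i) = 1 for n ≤ i ≤ 2n, and all other off-diagonal entries *. The graph G from the previous construction (special vertex a; clique B of size 2n all adjacent to a; independent set B' of mates; independent set S with one vertex per n-subset of B adjacent exactly to that subset) admits no M-partition. -/
variable {V : Type*}

/-- Vertices of the exponential obstruction: `a`, the clique `B` (`Fin (2n)`), the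
independent set of mates `B'` (`Fin (2n)`), and `S` (one vertex per `n`-subset of `B`). -/
abbrev Vtx (n : ℕ) :=
  (Unit ⊕ Fin (2 * n)) ⊕ (Fin (2 * n) ⊕ {T : Finset (Fin (2 * n)) // T.card = n})

/-- Base relation: `B ∪ {a}` is a clique; `b'_j` is adjacent to `a` and to every
`b_i` with `i ≠ j`; `s_T` is adjacent exactly to the vertices `b_i` with `i ∈ T`. -/
def obsRel (n : ℕ) : Vtx n → Vtx n → Prop
  | .inl _, .inl _ => True
  | .inl (.inl _), .inr (.inl _) => True
  | .inl (.inr i), .inr (.inl j) => i ≠ j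
  | .inl (.inl _), .inr (.inr _) => False
  | .inl (.inr i), .inr (.inr T) => i ∈ T.1
  | _, _ => False

/-- The split graph `G` of the construction. -/
def Gobs (n : ℕ) : SimpleGraph (Vtx n) := SimpleGraph.fromRel (obsRel n)

/-- The matrix `M_{2n+1,n}`: zero diagonal, symmetric 1s between the last index and
the middle `n` indices (1-indexed rows `n,…,2n`), asterisks elsewhere. -/
def Mkt (n : ℕ) : Matrix (Fin (2 * n + 1)) (Fin (2 * n + 1)) (Option Bool) :=
  fun i j =>
    if i = j then some false
    else if (j = Fin.last (2 * n) ∧ n - 1 ≤ (i : ℕ)) ∨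
            (i = Fin.last (2 * n) ∧ n - 1 ≤ (j : ℕ)) then some true
    else none

/-!
`B ∪ {a}` is a clique of size `2n+1`, so the partition maps it bijectively onto the parts, and
each mate `b'` lies in the part of its `b`. Hence `a` lies in the last part `P`: otherwise `P`
and a restricted part would each contain a pair `b, b'`, and the two nonadjacent mates would
violate the `1` between these parts. Let `T` be the set of `b`s in the parts `0, …, n - 1`
(the unrestricted parts and the first restricted one). Then `s_T` fits nowhere: in `P` it would
have to see the `b` of part `n`, each part below `n` contains a neighbour of it, and a
restricted part forces adjacency to `a`.
-/

namespace IsMPartition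

variable {m : ℕ} {M : Matrix (Fin m) (Fin m) (Option Bool)} {G : SimpleGraph V}
  {f : V → Fin m} {u v : V}

theorem ne_of_adj (hf : IsMPartition M G f) (hM : ∀ i, M i i = some false)
    (h : G.Adj u v) : f u ≠ f v := fun he =>
  (hf u v h.ne).2 (by rw [he, hM]) h

theorem adj_of_eq_some_true (hf : IsMPartition M G f) (hM : ∀ i, M i i = some false)
    (h : M (f u) (f v) = some true) : G.Adj u v := by
  refine (hf u v ?_).1 h
  rintro rfl
  simp [hM] at h

end IsMPartition

theorem Mkt_self (n : ℕ) (i : Fin (2 * n + 1)) : Mkt n i i = some false := if_pos rfl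

theorem Mkt_last_apply {n : ℕ} {i : Fin (2 * n + 1)} (hi : i ≠ Fin.last (2 * n))
    (h : n - 1 ≤ (i : ℕ)) : Mkt n (Fin.last (2 * n)) i = some true := by
  rw [Mkt, if_neg hi.symm, if_pos (Or.inr ⟨rfl, h⟩)]

namespace Vtx

variable {n : ℕ}

abbrev a : Vtx n := .inl (.inl ())
abbrev b (i : Fin (2 * n)) : Vtx n := .inl (.inr i)
abbrev b' (i : Fin (2 * n)) : Vtx n := .inr (.inl i)
abbrev s (T : {T : Finset (Fin (2 * n)) // T.card = n}) : Vtx n := .inr (.inr T)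

end Vtx

namespace Gobs

open Vtx

variable {n : ℕ}

theorem adj_inl {x y : Unit ⊕ Fin (2 * n)} (h : x ≠ y) :
    (Gobs n).Adj (.inl x) (.inl y) := by
  simp [Gobs, obsRel, h]

theorem adj_a_b' (j : Fin (2 * n)) : (Gobs n).Adj a (b' j) := by
  simp [Gobs, obsRel]

theorem adj_b_b' {i j : Fin (2 * n)} (h : i ≠ j) : (Gobs n).Adj (b i) (b' j) := by
  simp [Gobs, obsRel, h]

theorem adj_b_s_iff {i : Fin (2 * n)} {T : {T : Finset (Fin (2 * n)) // T.card = n}} :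
    (Gobs n).Adj (b i) (s T) ↔ i ∈ T.1 := by
  simp [Gobs, obsRel]

theorem not_adj_a_s (T : {T : Finset (Fin (2 * n)) // T.card = n}) :
    ¬ (Gobs n).Adj a (s T) := by
  simp [Gobs, obsRel]

theorem not_adj_b'_b' (i j : Fin (2 * n)) : ¬ (Gobs n).Adj (b' i) (b' j) := by
  simp [Gobs, obsRel]

end Gobs

def lowSet {n : ℕ} (f : Vtx n → Fin (2 * n + 1)) : Finset (Fin (2 * n)) :=
  {i | (f (Vtx.b i) : ℕ) < n}

namespace IsMPartition

open Vtx Finset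

variable {n : ℕ} {f : Vtx n → Fin (2 * n + 1)}

theorem bijective_comp_inl (hf : IsMPartition (Mkt n) (Gobs n) f) :
    Function.Bijective (f ∘ Sum.inl) := by
  refine (Fintype.bijective_iff_injective_and_card _).2 ⟨fun x y hxy => ?_, by simp; omega⟩
  by_contra hne
  exact hf.ne_of_adj (Mkt_self n) (Gobs.adj_inl hne) hxy

theorem injective_apply_b (hf : IsMPartition (Mkt n) (Gobs n) f) :
    Function.Injective fun i => f (b i) :=
  hf.bijective_comp_inl.1.comp Sum.inr_injective

theorem exists_apply_b_eq_of_ne_apply_a (hf : IsMPartition (Mkt n) (Gobs n) f)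
    {p : Fin (2 * n + 1)} (hp : p ≠ f a) : ∃ k, f (b k) = p := by
  obtain ⟨_ | k, hk⟩ := hf.bijective_comp_inl.2 p
  · exact absurd hk.symm hp
  · exact ⟨k, hk⟩

theorem apply_b'_eq_apply_b (hf : IsMPartition (Mkt n) (Gobs n) f) (k : Fin (2 * n)) :
    f (b' k) = f (b k) := by
  obtain ⟨_ | m, hm⟩ := hf.bijective_comp_inl.2 (f (b' k))
  · exact absurd hm (hf.ne_of_adj (Mkt_self n) (Gobs.adj_a_b' k))
  · obtain rfl | hmk := eq_or_ne m k
    · exact hm.symm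
    · exact absurd hm (hf.ne_of_adj (Mkt_self n) (Gobs.adj_b_b' hmk))

theorem apply_a_eq_last (hf : IsMPartition (Mkt n) (Gobs n) f) (hn : 1 ≤ n) :
    f a = Fin.last (2 * n) := by
  by_contra hne
  obtain ⟨k, hk⟩ := hf.exists_apply_b_eq_of_ne_apply_a (Ne.symm hne)
  obtain ⟨r, hr, hr_last, hra⟩ :
      ∃ r : Fin (2 * n + 1), n - 1 ≤ (r : ℕ) ∧ r ≠ Fin.last (2 * n) ∧ r ≠ f a := by
    by_cases h : (f a : ℕ) = n
    · exact ⟨⟨n - 1, by omega⟩, le_rfl, Fin.ne_of_val_ne (by simp; omega),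
        Fin.ne_of_val_ne (by simp; omega)⟩
    · exact ⟨⟨n, by omega⟩, by simp, Fin.ne_of_val_ne (by simp; omega),
        Fin.ne_of_val_ne (by simp; omega)⟩
  obtain ⟨m, hm⟩ := hf.exists_apply_b_eq_of_ne_apply_a hra
  refine Gobs.not_adj_b'_b' k m (hf.adj_of_eq_some_true (Mkt_self n) ?_)
  rw [hf.apply_b'_eq_apply_b, hf.apply_b'_eq_apply_b, hk, hm]
  exact Mkt_last_apply hr_last hr

theorem exists_apply_b_eq_of_ne_last (hf : IsMPartition (Mkt n) (Gobs n) f) (hn : 1 ≤ n)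
    {p : Fin (2 * n + 1)} (hp : p ≠ Fin.last (2 * n)) : ∃ k, f (b k) = p :=
  hf.exists_apply_b_eq_of_ne_apply_a (hf.apply_a_eq_last hn ▸ hp)

theorem card_lowSet (hf : IsMPartition (Mkt n) (Gobs n) f) (hn : 1 ≤ n) :
    #(lowSet f) = n := by
  have himage : (lowSet f).image (fun i => f (b i)) = Iio ⟨n, by omega⟩ := by
    ext p
    simp only [lowSet, mem_image, mem_filter, mem_univ, true_and, mem_Iio, Fin.lt_def]
    constructor
    · rintro ⟨i, hi, rfl⟩
      exact hi
    · intro hp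
      obtain ⟨k, hk⟩ := hf.exists_apply_b_eq_of_ne_last hn (p := p)
        (Fin.ne_of_val_ne (by simp; omega))
      exact ⟨k, hk ▸ hp, hk⟩
  rw [← card_image_of_injective _ hf.injective_apply_b, himage, Fin.card_Iio]

theorem apply_s_lowSet_ne_last (hf : IsMPartition (Mkt n) (Gobs n) f) (hn : 1 ≤ n) :
    f (s ⟨lowSet f, hf.card_lowSet hn⟩) ≠ Fin.last (2 * n) := by
  intro hP
  obtain ⟨m, hm⟩ := hf.exists_apply_b_eq_of_ne_last hn (p := ⟨n, by omega⟩)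
    (Fin.ne_of_val_ne (by simp; omega))
  have hadj := hf.adj_of_eq_some_true (Mkt_self n) (v := b m) (by
    rw [hP, hm]
    exact Mkt_last_apply (Fin.ne_of_val_ne (by simp; omega)) (by simp))
  simpa [lowSet, hm] using Gobs.adj_b_s_iff.1 hadj.symm

theorem not_apply_s_lowSet_lt (hf : IsMPartition (Mkt n) (Gobs n) f) (hn : 1 ≤ n) :
    ¬ (f (s ⟨lowSet f, hf.card_lowSet hn⟩) : ℕ) < n := by
  intro hlow
  obtain ⟨m, hm⟩ := hf.exists_apply_b_eq_of_ne_last hn (hf.apply_s_lowSet_ne_last hn)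
  refine hf.ne_of_adj (Mkt_self n) (Gobs.adj_b_s_iff.2 ?_) hm
  simpa [lowSet, hm] using hlow

end IsMPartition

/-- the constructed split graph admits no `M_{2n+1,n}`-partition. -/
theorem stmt14 (n : ℕ) (hn : 1 ≤ n) : ¬ HasMPartition (Mkt n) (Gobs n) := by
  rintro ⟨f, hf⟩
  have hP := hf.apply_s_lowSet_ne_last hn
  have hhigh := hf.not_apply_s_lowSet_lt hn
  refine Gobs.not_adj_a_s ⟨lowSet f, hf.card_lowSet hn⟩ (hf.adj_of_eq_some_true (Mkt_self n) ?_)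
  rw [hf.apply_a_eq_last hn]
  exact Mkt_last_apply hP (by omega)
end
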